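/- arXiv:1307.6208 — 7 statements merged into one kernel-verified Lean document; each statement's English description precedes it below -/
import Mathlib

section
/- Let r, t be sequences of nonzero reals and s a sequence with s₀ ≠ 0, and let (D_n) be the reciprocal coefficients of s (so ∑_{k=0}^n s_{n-k}(-1)^k D_k = δ_{n0}·s₀D₀ with s₀D₀=1). Then the matrix B with entries b_{nk} = (-1)^{n-k} D_{n-k} r_k / t_n for 0 ≤ k ≤ n and 0 otherwise is the two-sided inverse of the matrix A(r,s,t) with entries s_{n-k} t_k / r_n for 0 ≤ k ≤ n. -/
/-!
Both triangles are of the form `diag(1/r) · T(s) · diag(t)` with `T(s)` the lower triangular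
Toeplitz matrix of `s`, and `B = A(t, ŝ, r)` for `ŝ n = (-1)^n D n`. The diagonal factors cancel
in either product, and `T(s) T(ŝ) = T(ŝ) T(s)` is the Toeplitz matrix of the power series product
`(∑ sₙ Xⁿ)(∑ ŝₙ Xⁿ)`, which is `1` precisely by the defining recursion of `D`.
-/

open Finset PowerSeries

namespace GenMeans

variable {K : Type*} [Field K]

/-- The generalized means matrix `A(r,s,t)`. -/
def genMeans (r s t : ℕ → K) (n k : ℕ) : K :=
  if k ≤ n then s (n - k) * t k / r n else 0

theorem mk_mul_mk_eq_one {R : Type*} [Semiring R] (a b : ℕ → R) (h0 : a 0 * b 0 = 1)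
    (h : ∀ n, 1 ≤ n → ∑ k ∈ range (n + 1), a k * b (n - k) = 0) :
    mk a * mk b = 1 := by
  ext n
  rw [coeff_mul, Nat.sum_antidiagonal_eq_sum_range_succ (fun i j => coeff i (mk a) * coeff j (mk b)),
    coeff_one]
  simp only [coeff_mk]
  rcases Nat.eq_zero_or_pos n with rfl | hn
  · simpa using h0
  · rw [if_neg hn.ne']
    exact h n hn

theorem sum_genMeans_mul_genMeans (r s t s' : ℕ → K) (ht : ∀ n, t n ≠ 0) (n k : ℕ) :
    ∑ j ∈ range (n + 1), genMeans r s t n j * genMeans t s' r j k =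
      if k ≤ n then r k / r n * coeff (n - k) (mk s * mk s') else 0 := by
  have below_k : ∀ j < k, genMeans r s t n j * genMeans t s' r j k = 0 := fun j hj => by
    simp [genMeans, Nat.not_le.mpr hj]
  split_ifs with hkn
  · obtain ⟨m, rfl⟩ := Nat.exists_eq_add_of_le hkn
    rw [show k + m + 1 = k + (m + 1) by ring, sum_range_add,
      sum_eq_zero fun j hj => below_k j (mem_range.mp hj), zero_add, mul_comm (mk s), coeff_mul,
      Nat.sum_antidiagonal_eq_sum_range_succ (fun i j => coeff i (mk s') * coeff j (mk s)),
      Nat.add_sub_cancel_left, mul_sum]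
    refine sum_congr rfl fun i hi => ?_
    have him : i ≤ m := Nat.lt_succ_iff.mp (mem_range.mp hi)
    have hk : k + m - (k + i) = m - i := by omega
    simp only [genMeans, coeff_mk, Nat.add_sub_cancel_left, hk, if_pos (Nat.add_le_add_left him k),
      if_pos (Nat.le_add_right k i)]
    field_simp [ht (k + i)]
  · exact sum_eq_zero fun j hj => below_k j (by simp at hj; omega)

theorem sum_genMeans_mul_genMeans_of_mul_eq_one {r s t s' : ℕ → K} (h : mk s * mk s' = 1)
    (hr : ∀ n, r n ≠ 0) (ht : ∀ n, t n ≠ 0) (n k : ℕ) :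
    ∑ j ∈ range (n + 1), genMeans r s t n j * genMeans t s' r j k = if n = k then 1 else 0 := by
  rw [sum_genMeans_mul_genMeans r s t s' ht, h, coeff_one]
  by_cases hnk : n = k
  · subst hnk
    simp [hr n]
  · by_cases hkn : k ≤ n
    · simp [hkn, hnk, show n - k ≠ 0 by omega]
    · simp [hkn, hnk]

end GenMeans

open GenMeans in
/-- The triangle `B` with entries `(-1)^{n-k} D_{n-k} r_k / t_n` is the two-sided
inverse of the generalized-means triangle `A(r,s,t)`. -/
theorem stmt_2 (r s t D : ℕ → ℝ) (hr : ∀ n, r n ≠ 0) (ht : ∀ n, t n ≠ 0)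
    (hs : s 0 ≠ 0) (hD0 : D 0 = 1 / s 0)
    (hD : ∀ n : ℕ, 1 ≤ n →
      (∑ k ∈ Finset.range (n + 1), (-1 : ℝ) ^ k * D k * s (n - k)) = 0) :
    let A : ℕ → ℕ → ℝ := fun n k => if k ≤ n then s (n - k) * t k / r n else 0
    let B : ℕ → ℕ → ℝ := fun n k =>
      if k ≤ n then (-1 : ℝ) ^ (n - k) * D (n - k) * r k / t n else 0
    (∀ n k, (∑ j ∈ Finset.range (n + 1), A n j * B j k) = if n = k then 1 else 0) ∧
    (∀ n k, (∑ j ∈ Finset.range (n + 1), B n j * A j k) = if n = k then 1 else 0) := by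
  intro A B
  set sHat : ℕ → ℝ := fun k => (-1) ^ k * D k
  have hinv : mk sHat * mk s = 1 := mk_mul_mk_eq_one _ _ (by simp [sHat, hD0, hs]) hD
  exact ⟨sum_genMeans_mul_genMeans_of_mul_eq_one (s' := sHat) (by rwa [mul_comm]) hr ht,
    sum_genMeans_mul_genMeans_of_mul_eq_one (s := sHat) hinv ht hr⟩
end

section
/- Let r, t be sequences of nonzero reals and s a sequence with s₀ ≠ 0. Define ℓ∞(r,s,t;Δ) = { x : ℕ → ℝ | sup_n |(1/r_n) ∑_{k=0}^{n} s_{n-k} t_k (x_k − x_{k−1})| < ∞ } (with x_{−1} = 0), equipped with ‖x‖ = sup_n |(1/r_n) ∑_{k=0}^{n} s_{n-k} t_k (x_k − x_{k−1})|. Then ℓ∞(r,s,t;Δ) is a complete normed linear space. -/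
/-!
The operator `T x = A(r,s,t) (Δx)` is the composite of the backward difference `Δ`, inverted by
partial sums, and a lower-triangular matrix with diagonal entries `s₀ t_n / r_n ≠ 0`, inverted by
forward substitution. So `T` is a linear bijection of `ℕ → ℝ`, the space is `T⁻¹(ℓ∞)` and
`‖x‖ = ‖T x‖_∞`: `T` is an isometric isomorphism onto `ℓ∞`, and the norm axioms and completeness
are transported from `ℓ∞`.
-/

open Finset Function
open scoped ENNReal

section LowerTriangular

variable {K : Type*} [Field K]

def lowerTriangular (a : ℕ → ℕ → K) : (ℕ → K) →ₗ[K] (ℕ → K) where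
  toFun y n := ∑ k ∈ range (n + 1), a n k * y k
  map_add' y z := by funext n; simp [mul_add, sum_add_distrib]
  map_smul' c y := by funext n; simp [mul_sum, mul_left_comm]

lemma lowerTriangular_apply (a : ℕ → ℕ → K) (y : ℕ → K) (n : ℕ) :
    lowerTriangular a y n = ∑ k ∈ range (n + 1), a n k * y k := rfl

-- Summing over `Fin n` rather than `range n` puts `k < n` in scope, so termination is automatic.
def forwardSubst (a : ℕ → ℕ → K) (b : ℕ → K) (n : ℕ) : K :=
  (b n - ∑ k : Fin n, a n k * forwardSubst a b k) / a n n

lemma forwardSubst_eq (a : ℕ → ℕ → K) (b : ℕ → K) (n : ℕ) :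
    forwardSubst a b n = (b n - ∑ k ∈ range n, a n k * forwardSubst a b k) / a n n := by
  rw [forwardSubst, Fin.sum_univ_eq_sum_range (fun k => a n k * forwardSubst a b k)]

variable {a : ℕ → ℕ → K}

lemma lowerTriangular_forwardSubst (ha : ∀ n, a n n ≠ 0) (b : ℕ → K) :
    lowerTriangular a (forwardSubst a b) = b := by
  funext n
  rw [lowerTriangular_apply, sum_range_succ, forwardSubst_eq, mul_div_cancel₀ _ (ha n),
    add_sub_cancel]

lemma lowerTriangular_injective (ha : ∀ n, a n n ≠ 0) : Injective (lowerTriangular a) := by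
  intro y z hyz
  funext n
  induction n using Nat.strong_induction_on with
  | _ n ih =>
    have hn := congrFun hyz n
    rw [lowerTriangular_apply, lowerTriangular_apply, sum_range_succ, sum_range_succ,
      sum_congr rfl fun k hk => by rw [ih k (mem_range.mp hk)]] at hn
    exact mul_left_cancel₀ (ha n) (add_left_cancel hn)

lemma lowerTriangular_bijective (ha : ∀ n, a n n ≠ 0) : Bijective (lowerTriangular a) :=
  ⟨lowerTriangular_injective ha, fun b => ⟨_, lowerTriangular_forwardSubst ha b⟩⟩

end LowerTriangular

section BackwardDiff

variable {K : Type*} [Field K]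

def backwardDiff : (ℕ → K) →ₗ[K] (ℕ → K) where
  toFun x k := x k - if k = 0 then 0 else x (k - 1)
  map_add' x y := by funext k; cases k <;> simp [sub_add_sub_comm]
  map_smul' c x := by funext k; cases k <;> simp [mul_sub]

lemma backwardDiff_apply_zero (x : ℕ → K) : backwardDiff x 0 = x 0 := by
  simp [backwardDiff]

lemma backwardDiff_apply_succ (x : ℕ → K) (n : ℕ) :
    backwardDiff x (n + 1) = x (n + 1) - x n := by
  simp [backwardDiff]

lemma backwardDiff_partialSums (y : ℕ → K) :
    backwardDiff (fun n => ∑ k ∈ range (n + 1), y k) = y := by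
  funext n
  cases n with
  | zero => simp [backwardDiff_apply_zero]
  | succ n => rw [backwardDiff_apply_succ, sum_range_succ, add_sub_cancel_left]

lemma backwardDiff_injective : Injective (backwardDiff : (ℕ → K) →ₗ[K] (ℕ → K)) := by
  intro x y hxy
  funext n
  induction n with
  | zero => simpa [backwardDiff_apply_zero] using congrFun hxy 0
  | succ n ih =>
    have hn := congrFun hxy (n + 1)
    rw [backwardDiff_apply_succ, backwardDiff_apply_succ, ih] at hn
    exact sub_left_inj.mp hn

lemma backwardDiff_bijective : Bijective (backwardDiff : (ℕ → K) →ₗ[K] (ℕ → K)) :=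
  ⟨backwardDiff_injective, fun y => ⟨_, backwardDiff_partialSums y⟩⟩

end BackwardDiff

section PullbackLinfty

variable {E ι : Type*} {T : E → ι → ℝ}

def pullbackLinfty (T : E → ι → ℝ) : Set E := {x | BddAbove (Set.range fun i => |T x i|)}

noncomputable def pullbackSupNorm (T : E → ι → ℝ) (x : E) : ℝ := ⨆ i, |T x i|

lemma mem_pullbackLinfty_iff {x : E} : x ∈ pullbackLinfty T ↔ Memℓp (T x) ∞ := by
  simp only [pullbackLinfty, Set.mem_ofPred_eq, memℓp_infty_iff, Real.norm_eq_abs]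

def toLinfty {x : E} (hx : x ∈ pullbackLinfty T) : lp (fun _ : ι => ℝ) ∞ :=
  ⟨T x, mem_pullbackLinfty_iff.mp hx⟩

lemma pullbackSupNorm_eq_norm {x : E} (hx : x ∈ pullbackLinfty T) :
    pullbackSupNorm T x = ‖toLinfty hx‖ := by
  simp only [pullbackSupNorm, lp.norm_eq_ciSup, Real.norm_eq_abs]; rfl

lemma pullbackSupNorm_nonneg (x : E) : 0 ≤ pullbackSupNorm T x :=
  Real.iSup_nonneg fun _ => abs_nonneg _

variable [AddCommGroup E] [Module ℝ E]

lemma zero_mem_pullbackLinfty (hT : IsLinearMap ℝ T) : (0 : E) ∈ pullbackLinfty T :=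
  mem_pullbackLinfty_iff.mpr (hT.map_zero ▸ zero_memℓp)

lemma add_mem_pullbackLinfty (hT : IsLinearMap ℝ T) {x y : E} (hx : x ∈ pullbackLinfty T)
    (hy : y ∈ pullbackLinfty T) : x + y ∈ pullbackLinfty T := by
  rw [mem_pullbackLinfty_iff, hT.map_add] at *
  exact hx.add hy

lemma sub_mem_pullbackLinfty (hT : IsLinearMap ℝ T) {x y : E} (hx : x ∈ pullbackLinfty T)
    (hy : y ∈ pullbackLinfty T) : x - y ∈ pullbackLinfty T := by
  rw [mem_pullbackLinfty_iff, hT.map_sub] at *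
  exact hx.sub hy

lemma smul_mem_pullbackLinfty (hT : IsLinearMap ℝ T) (c : ℝ) {x : E}
    (hx : x ∈ pullbackLinfty T) : c • x ∈ pullbackLinfty T := by
  rw [mem_pullbackLinfty_iff, hT.map_smul] at *
  exact hx.const_smul c

lemma toLinfty_sub (hT : IsLinearMap ℝ T) {x y : E} (hx : x ∈ pullbackLinfty T)
    (hy : y ∈ pullbackLinfty T) :
    toLinfty (sub_mem_pullbackLinfty hT hx hy) = toLinfty hx - toLinfty hy :=
  Subtype.ext (hT.map_sub x y)

lemma toLinfty_add (hT : IsLinearMap ℝ T) {x y : E} (hx : x ∈ pullbackLinfty T)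
    (hy : y ∈ pullbackLinfty T) :
    toLinfty (add_mem_pullbackLinfty hT hx hy) = toLinfty hx + toLinfty hy :=
  Subtype.ext (hT.map_add x y)

lemma pullbackSupNorm_sub_eq_dist (hT : IsLinearMap ℝ T) {x y : E} (hx : x ∈ pullbackLinfty T)
    (hy : y ∈ pullbackLinfty T) : pullbackSupNorm T (x - y) = dist (toLinfty hx) (toLinfty hy) := by
  rw [pullbackSupNorm_eq_norm (sub_mem_pullbackLinfty hT hx hy), toLinfty_sub hT, dist_eq_norm]

lemma pullbackSupNorm_eq_zero_iff (hT : IsLinearMap ℝ T) (hinj : Injective T) {x : E}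
    (hx : x ∈ pullbackLinfty T) : pullbackSupNorm T x = 0 ↔ x = 0 := by
  rw [pullbackSupNorm_eq_norm hx, norm_eq_zero, lp.eq_zero_iff_coeFn_eq_zero]
  change T x = 0 ↔ x = 0
  rw [← hT.map_zero, hinj.eq_iff]

lemma pullbackSupNorm_smul (hT : IsLinearMap ℝ T) (c : ℝ) (x : E) :
    pullbackSupNorm T (c • x) = |c| * pullbackSupNorm T x := by
  simp only [pullbackSupNorm, hT.map_smul, Pi.smul_apply, smul_eq_mul, abs_mul,
    Real.mul_iSup_of_nonneg (abs_nonneg c)]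

lemma pullbackSupNorm_add_le (hT : IsLinearMap ℝ T) {x y : E} (hx : x ∈ pullbackLinfty T)
    (hy : y ∈ pullbackLinfty T) :
    pullbackSupNorm T (x + y) ≤ pullbackSupNorm T x + pullbackSupNorm T y := by
  rw [pullbackSupNorm_eq_norm (add_mem_pullbackLinfty hT hx hy), pullbackSupNorm_eq_norm hx,
    pullbackSupNorm_eq_norm hy, toLinfty_add hT]
  exact norm_add_le _ _

lemma exists_tendsto_pullbackSupNorm (hT : IsLinearMap ℝ T) (hsurj : Surjective T)
    (f : ℕ → E) (hf : ∀ m, f m ∈ pullbackLinfty T)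
    (hcau : ∀ ε : ℝ, 0 < ε → ∃ M, ∀ m ≥ M, ∀ l ≥ M, pullbackSupNorm T (f m - f l) < ε) :
    ∃ x ∈ pullbackLinfty T, ∀ ε : ℝ, 0 < ε → ∃ M, ∀ m ≥ M, pullbackSupNorm T (f m - x) < ε := by
  have hF : CauchySeq fun m => toLinfty (hf m) := by
    refine Metric.cauchySeq_iff.mpr fun ε hε => ?_
    obtain ⟨M, hM⟩ := hcau ε hε
    exact ⟨M, fun m hm l hl => pullbackSupNorm_sub_eq_dist hT (hf m) (hf l) ▸ hM m hm l hl⟩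
  obtain ⟨g, hg⟩ := cauchySeq_tendsto_of_complete hF
  obtain ⟨x, hxg⟩ := hsurj g
  have hx : x ∈ pullbackLinfty T := mem_pullbackLinfty_iff.mpr (hxg ▸ g.2)
  have hgx : toLinfty hx = g := Subtype.ext hxg
  refine ⟨x, hx, fun ε hε => ?_⟩
  obtain ⟨M, hM⟩ := Metric.tendsto_atTop.mp hg ε hε
  exact ⟨M, fun m hm => by rw [pullbackSupNorm_sub_eq_dist hT (hf m) hx, hgx]; exact hM m hm⟩

end PullbackLinfty

section WeightedDiff

variable {K : Type*} [Field K]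

def weightedDiff (r s t : ℕ → K) (x : ℕ → K) (n : ℕ) : K :=
  (1 / r n) * ∑ k ∈ range (n + 1), s (n - k) * t k * (x k - if k = 0 then 0 else x (k - 1))

lemma weightedDiff_eq_comp (r s t : ℕ → K) :
    weightedDiff r s t =
      ⇑(lowerTriangular (fun n k => 1 / r n * (s (n - k) * t k)) ∘ₗ backwardDiff) := by
  funext x n
  simp only [weightedDiff, LinearMap.comp_apply, lowerTriangular_apply, mul_sum, mul_assoc]
  rfl

lemma isLinearMap_weightedDiff (r s t : ℕ → K) : IsLinearMap K (weightedDiff r s t) :=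
  weightedDiff_eq_comp r s t ▸ LinearMap.isLinear _

lemma bijective_weightedDiff {r s t : ℕ → K} (hr : ∀ n, r n ≠ 0) (ht : ∀ n, t n ≠ 0)
    (hs : s 0 ≠ 0) : Bijective (weightedDiff r s t) := by
  have hdiag (n : ℕ) : 1 / r n * (s (n - n) * t n) ≠ 0 := by
    rw [Nat.sub_self]
    exact mul_ne_zero (one_div_ne_zero (hr n)) (mul_ne_zero hs (ht n))
  rw [weightedDiff_eq_comp, LinearMap.coe_comp]
  exact (lowerTriangular_bijective hdiag).comp backwardDiff_bijective

end WeightedDiff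

/-- `ℓ∞(r,s,t;Δ)` with the norm `sup_n |(A(r,s,t)·Δ x)_n|` is a complete normed
linear space: it is a linear subspace, the functional is a norm on it, and every
Cauchy sequence in it converges to a member of it. -/
theorem stmt_3 (r s t : ℕ → ℝ) (hr : ∀ n, r n ≠ 0) (ht : ∀ n, t n ≠ 0)
    (hs : s 0 ≠ 0) :
    let T : (ℕ → ℝ) → ℕ → ℝ := fun x n =>
      (1 / r n) * ∑ k ∈ Finset.range (n + 1),
        s (n - k) * t k * (x k - if k = 0 then 0 else x (k - 1))
    let X : Set (ℕ → ℝ) := {x | BddAbove (Set.range fun n => |T x n|)}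
    let N : (ℕ → ℝ) → ℝ := fun x => ⨆ n, |T x n|
    ((0 : ℕ → ℝ) ∈ X) ∧
    (∀ x ∈ X, ∀ y ∈ X, x + y ∈ X) ∧
    (∀ (c : ℝ), ∀ x ∈ X, c • x ∈ X) ∧
    (∀ x ∈ X, 0 ≤ N x) ∧
    (∀ x ∈ X, (N x = 0 ↔ x = 0)) ∧
    (∀ (c : ℝ), ∀ x ∈ X, N (c • x) = |c| * N x) ∧
    (∀ x ∈ X, ∀ y ∈ X, N (x + y) ≤ N x + N y) ∧
    (∀ f : ℕ → (ℕ → ℝ), (∀ m, f m ∈ X) →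
      (∀ ε : ℝ, 0 < ε → ∃ M, ∀ m ≥ M, ∀ l ≥ M, N (f m - f l) < ε) →
      ∃ x ∈ X, ∀ ε : ℝ, 0 < ε → ∃ M, ∀ m ≥ M, N (f m - x) < ε) := by
  intro T X N
  have hlin : IsLinearMap ℝ T := isLinearMap_weightedDiff r s t
  have hbij : Bijective T := bijective_weightedDiff hr ht hs
  exact ⟨zero_mem_pullbackLinfty hlin, fun _ hx _ hy => add_mem_pullbackLinfty hlin hx hy,
    fun c _ hx => smul_mem_pullbackLinfty hlin c hx, fun x _ => pullbackSupNorm_nonneg x,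
    fun _ hx => pullbackSupNorm_eq_zero_iff hlin hbij.1 hx,
    fun c x _ => pullbackSupNorm_smul hlin c x, fun _ hx _ hy => pullbackSupNorm_add_le hlin hx hy,
    exists_tendsto_pullbackSupNorm hlin hbij.2⟩
end

section
/- Let r, t be sequences of nonzero reals and s a sequence with s₀ ≠ 0. The map T : ℓ∞(r,s,t;Δ) → ℓ∞ defined by (Tx)_n = (1/r_n) ∑_{k=0}^{n} s_{n-k} t_k (x_k − x_{k−1}) is a linear isometric isomorphism onto ℓ∞ (the space of bounded real sequences with the sup norm). -/
/-! The map factors as `x ↦ r⁻¹ · (s ⋆ (t · Δx))`, where `Δ` is the backward difference and `⋆`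
the Cauchy product. Each factor is a linear bijection: `Δ` is inverted by partial sums, the
pointwise multiplications because `r` and `t` do not vanish, and `s ⋆ ·` because it is
multiplication by the power series `∑ sₙ Xⁿ`, a unit as `s₀ ≠ 0` (its inverse has the
coefficients `Dₖ`). The norm of `ℓ∞(r,s,t;Δ)` is transported from `ℓ∞` through `T`, so `T` is
isometric by construction. -/

open Finset PowerSeries Function

section BackwardDifference

variable (R : Type*) {M : Type*} [Semiring R] [AddCommGroup M] [Module R M]

/-- The backward difference, with the convention `x₋₁ = 0`. -/
def bwdDiff : (ℕ → M) →ₗ[R] ℕ → M where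
  toFun x k := x k - if k = 0 then 0 else x (k - 1)
  map_add' x y := by
    funext k
    by_cases hk : k = 0 <;> simp [hk]; abel
  map_smul' c x := by
    funext k
    by_cases hk : k = 0 <;> simp [hk, smul_sub]

variable {R}

theorem sum_range_succ_bwdDiff (x : ℕ → M) (n : ℕ) :
    ∑ k ∈ range (n + 1), bwdDiff R x k = x n := by
  induction n with
  | zero => simp [bwdDiff]
  | succ n ih => rw [sum_range_succ, ih]; simp [bwdDiff]

theorem bwdDiff_sum_range_succ (d : ℕ → M) :
    bwdDiff R (fun n => ∑ k ∈ range (n + 1), d k) = d := by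
  funext n
  cases n <;> simp [bwdDiff, sum_range_succ]

variable (R M) in
theorem bwdDiff_bijective : Bijective (bwdDiff R : (ℕ → M) → ℕ → M) :=
  bijective_iff_has_inverse.2 ⟨fun d n => ∑ k ∈ range (n + 1), d k,
    fun x => funext (sum_range_succ_bwdDiff x), bwdDiff_sum_range_succ⟩

end BackwardDifference

section CauchyProduct

def cauchyProduct {R : Type*} [CommSemiring R] (s : ℕ → R) : (ℕ → R) →ₗ[R] ℕ → R where
  toFun d n := ∑ k ∈ range (n + 1), s (n - k) * d k
  map_add' d e := by
    funext n
    simp [mul_add, sum_add_distrib]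
  map_smul' c d := by
    funext n
    simp [mul_sum, mul_left_comm]

theorem mk_cauchyProduct {R : Type*} [CommSemiring R] (s d : ℕ → R) :
    mk (cauchyProduct s d) = mk s * mk d := by
  ext n
  rw [mul_comm, coeff_mul,
    Nat.sum_antidiagonal_eq_sum_range_succ (fun i j => coeff i (mk d) * coeff j (mk s))]
  simp [cauchyProduct, mul_comm]

theorem cauchyProduct_bijective {K : Type*} [Field K] {s : ℕ → K} (hs : s 0 ≠ 0) :
    Bijective (cauchyProduct s) := by
  have mk_injective : Injective (mk : (ℕ → K) → K⟦X⟧) :=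
    fun d e h => funext fun n => by simpa using congrArg (coeff n) h
  have hs_const : constantCoeff (mk s) ≠ 0 := by
    simpa [← coeff_zero_eq_constantCoeff_apply]
  refine ⟨fun d e h => mk_injective (mul_left_cancel₀ (ne_zero_of_map hs_const) ?_),
    fun e => ⟨fun n => coeff n ((mk s)⁻¹ * mk e), mk_injective ?_⟩⟩
  · simpa only [mk_cauchyProduct] using congrArg mk h
  · have mk_coeff : mk (fun n => coeff n ((mk s)⁻¹ * mk e)) = (mk s)⁻¹ * mk e := by ext; simp
    rw [mk_cauchyProduct, mk_coeff, ← mul_assoc, PowerSeries.mul_inv_cancel _ hs_const, one_mul]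

end CauchyProduct

section DiffTransform

variable {K : Type*} [Field K]

theorem mulLeft_bijective_of_forall_ne_zero {t : ℕ → K} (ht : ∀ n, t n ≠ 0) :
    Bijective (LinearMap.mulLeft K t) :=
  IsUnit.isUnit_iff_mulLeft_bijective.1 (Pi.isUnit_iff.2 fun n => (ht n).isUnit)

/-- The matrix transform `A(r,s,t)·Δ` defining `ℓ∞(r,s,t;Δ)`. -/
def diffTransform (r s t : ℕ → K) : (ℕ → K) →ₗ[K] ℕ → K :=
  LinearMap.mulLeft K r⁻¹ ∘ₗ cauchyProduct s ∘ₗ LinearMap.mulLeft K t ∘ₗ bwdDiff K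

theorem diffTransform_apply (r s t x : ℕ → K) (n : ℕ) :
    diffTransform r s t x n = (1 / r n) * ∑ k ∈ range (n + 1),
      s (n - k) * t k * (x k - if k = 0 then 0 else x (k - 1)) := by
  simp [diffTransform, cauchyProduct, bwdDiff, mul_assoc]

theorem diffTransform_bijective {r s t : ℕ → K} (hr : ∀ n, r n ≠ 0) (ht : ∀ n, t n ≠ 0)
    (hs : s 0 ≠ 0) : Bijective (diffTransform r s t) := by
  simp only [diffTransform, LinearMap.coe_comp]
  exact (mulLeft_bijective_of_forall_ne_zero fun n => inv_ne_zero (hr n)).comp <|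
    (cauchyProduct_bijective hs).comp <|
      (mulLeft_bijective_of_forall_ne_zero ht).comp (bwdDiff_bijective K K)

end DiffTransform

/-- The map `T = A(r,s,t)·Δ` is a linear isometric isomorphism from
`ℓ∞(r,s,t;Δ)` onto `ℓ∞`. -/
theorem stmt_4 (r s t : ℕ → ℝ) (hr : ∀ n, r n ≠ 0) (ht : ∀ n, t n ≠ 0)
    (hs : s 0 ≠ 0) :
    let T : (ℕ → ℝ) → ℕ → ℝ := fun x n =>
      (1 / r n) * ∑ k ∈ Finset.range (n + 1),
        s (n - k) * t k * (x k - if k = 0 then 0 else x (k - 1))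
    let X : Set (ℕ → ℝ) := {x | BddAbove (Set.range fun n => |T x n|)}
    let L : Set (ℕ → ℝ) := {y | BddAbove (Set.range fun n => |y n|)}
    let N : (ℕ → ℝ) → ℝ := fun x => ⨆ n, |T x n|
    (∀ x y : ℕ → ℝ, T (x + y) = T x + T y) ∧
    (∀ (c : ℝ) (x : ℕ → ℝ), T (c • x) = c • T x) ∧
    (∀ x ∈ X, T x ∈ L) ∧
    (∀ x y : ℕ → ℝ, T x = T y → x = y) ∧
    (∀ y ∈ L, ∃ x ∈ X, T x = y) ∧
    (∀ x ∈ X, N x = ⨆ n, |T x n|) := by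
  intro T X L N
  have hT : T = diffTransform r s t :=
    funext fun x => funext fun n => (diffTransform_apply r s t x n).symm
  have hbij := diffTransform_bijective hr ht hs
  refine ⟨fun x y => by rw [hT, map_add], fun c x => by rw [hT, map_smul], fun x hx => hx,
    fun x y h => hbij.1 (by rwa [hT] at h), fun y hy => ?_, fun x _ => rfl⟩
  obtain ⟨x, rfl⟩ := hbij.2 y
  exact ⟨x, show T x ∈ L by rwa [hT], by rw [hT]⟩
end

section
/- Let A = (a_{nk}) be an infinite real matrix. Then A maps ℓ∞ into c₀ (i.e., for every bounded sequence x, ∑_k a_{nk} x_k converges for each n and tends to 0 as n → ∞) if and only if lim_{n→∞} ∑_{k=0}^{∞} |a_{nk}| = 0. -/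
/-!
Gliding hump. If `∑' k, |a n k|` does not tend to `0`, pick rows `n_0 < n_1 < ⋯` on which it stays
`≥ ε`. Since each column tends to `0` and each row is summable, the rows can be chosen together with
consecutive blocks `[M j, M (j+1))` such that row `n_j` carries all but `ε/4` of its mass on its
block. The test sequence `x k = sign (a n_j k)` on the `j`-th block has `|x| ≤ 1` and gives
`∑' k, a n_j k * x k ≥ ε/2` for every `j`, contradicting `A x ∈ c₀`.
-/

open Filter Topology Finset SignType

lemma SignType.abs_coe_le_one (s : SignType) : |(s : ℝ)| ≤ 1 := by
  cases s <;> simp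

lemma summable_mul_of_summable_abs {f x : ℕ → ℝ} {C : ℝ} (hf : Summable fun k => |f k|)
    (hx : ∀ k, |x k| ≤ C) : Summable fun k => f k * x k :=
  (hf.mul_right C).of_norm_bounded fun k => by
    rw [Real.norm_eq_abs, abs_mul]
    exact mul_le_mul_of_nonneg_left (hx k) (abs_nonneg _)

lemma abs_tsum_mul_le {f x : ℕ → ℝ} {C : ℝ} (hf : Summable fun k => |f k|)
    (hx : ∀ k, |x k| ≤ C) : |∑' k, f k * x k| ≤ C * ∑' k, |f k| := by
  rw [← tsum_mul_left]
  refine tsum_of_norm_bounded (f := fun k => f k * x k) (hf.mul_left C).hasSum fun k => ?_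
  rw [Real.norm_eq_abs, abs_mul, mul_comm C]
  exact mul_le_mul_of_nonneg_left (hx k) (abs_nonneg _)

lemma summable_abs_of_forall_summable_mul {f : ℕ → ℝ}
    (H : ∀ x : ℕ → ℝ, (∀ k, |x k| ≤ 1) → Summable fun k => f k * x k) :
    Summable fun k => |f k| := by
  simpa only [self_mul_sign] using H _ fun k => (sign (f k)).abs_coe_le_one

lemma tsum_mul_pi_single_one (f : ℕ → ℝ) (j : ℕ) :
    ∑' k, f k * (Pi.single j 1 : ℕ → ℝ) k = f j := by
  simp [Pi.single_apply]

lemma tsum_sub_two_mul_le_tsum_mul {f x : ℕ → ℝ} (hf : Summable fun k => |f k|)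
    (hx : ∀ k, |x k| ≤ 1) {s : Finset ℕ} (hs : ∀ k ∈ s, x k = sign (f k)) :
    ∑' k, |f k| - 2 * (∑' k, |f k| - ∑ k ∈ s, |f k|) ≤ ∑' k, f k * x k := by
  have hfx := summable_mul_of_summable_abs hf hx
  have hind : Summable ((s : Set ℕ).indicator fun k => |f k|) :=
    summable_of_ne_finset_zero fun k hk => Set.indicator_of_notMem (by simpa using hk) _
  -- the summand `|f k| - f k * x k` vanishes on `s` and is at most `2 * |f k|` off `s`
  have hpt : ∀ k,
      |f k| - f k * x k ≤ 2 * |f k| - 2 * (s : Set ℕ).indicator (fun k => |f k|) k := by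
    intro k
    by_cases hk : k ∈ s
    · simp [hk, hs k hk]
    · have : |f k * x k| ≤ |f k| := by
        rw [abs_mul]
        exact mul_le_of_le_one_right (abs_nonneg _) (hx k)
      simp only [hk, Set.indicator_of_notMem, Finset.mem_coe, not_false_eq_true, mul_zero]
      linarith [neg_abs_le (f k * x k)]
  have := (hf.sub hfx).tsum_le_tsum hpt ((hf.mul_left 2).sub (hind.mul_left 2))
  rw [hf.tsum_sub hfx, (hf.mul_left 2).tsum_sub (hind.mul_left 2), tsum_mul_left, tsum_mul_left,
    ← sum_eq_tsum_indicator] at this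
  linarith

lemma StrictMono.exists_eq_on_Ico {α : Type*} {M : ℕ → ℕ} (hM : StrictMono M) (g : ℕ → ℕ → α) :
    ∃ x : ℕ → α, (∀ k, ∃ j, x k = g j k) ∧ ∀ j, ∀ k ∈ Ico (M j) (M (j + 1)), x k = g j k := by
  have hex : ∀ k, ∃ j, k < M (j + 1) := fun k => ⟨k, (hM.id_le k).trans_lt (hM k.lt_succ_self)⟩
  refine ⟨fun k => g (Nat.find (hex k)) k, fun k => ⟨_, rfl⟩, fun j k hk => ?_⟩
  rw [mem_Ico] at hk
  suffices Nat.find (hex k) = j by simp only [this]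
  refine (Nat.find_eq_iff _).2 ⟨hk.2, fun i hi => ?_⟩
  exact not_lt.2 ((hM.monotone hi).trans hk.1)

section GlidingHump

variable {f : ℕ → ℕ → ℝ} {p : ℕ → Prop} {δ : ℝ}

lemma exists_tsum_abs_sub_sum_Ico_le (hrow : ∀ n, Summable fun k => |f n k|)
    (hcol : ∀ k, Tendsto (f · k) atTop (𝓝 0)) (hp : ∃ᶠ n in atTop, p n) (hδ : 0 < δ) (N M : ℕ) :
    ∃ n, N < n ∧ ∃ M', M < M' ∧ p n ∧ ∑' k, |f n k| - ∑ k ∈ Ico M M', |f n k| ≤ δ := by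
  have hhead : Tendsto (fun n => ∑ k ∈ range M, |f n k|) atTop (𝓝 0) := by
    simpa using tendsto_finsetSum (range M) fun k _ => (hcol k).abs
  obtain ⟨n, hpn, hNn, hn⟩ := (hp.and_eventually ((eventually_gt_atTop N).and
    (hhead.eventually (gt_mem_nhds (half_pos hδ))))).exists
  have htail := (hrow n).hasSum.tendsto_sum_nat
  obtain ⟨M', hMM', hM'⟩ := ((eventually_gt_atTop M).and
    (htail.eventually (lt_mem_nhds (sub_lt_self _ (half_pos hδ))))).exists
  refine ⟨n, hNn, M', hMM', hpn, ?_⟩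
  rw [sum_Ico_eq_sub _ hMM'.le]
  linarith

theorem exists_strictMono_tsum_abs_sub_le_tsum_mul (hrow : ∀ n, Summable fun k => |f n k|)
    (hcol : ∀ k, Tendsto (f · k) atTop (𝓝 0)) (hp : ∃ᶠ n in atTop, p n) (hδ : 0 < δ) :
    ∃ φ : ℕ → ℕ, StrictMono φ ∧ (∀ j, p (φ j)) ∧ ∃ x : ℕ → ℝ, (∀ k, |x k| ≤ 1) ∧
      ∀ j, ∑' k, |f (φ j) k| - δ ≤ ∑' k, f (φ j) k * x k := by
  choose ν hν μ hμ hpν hmass using exists_tsum_abs_sub_sum_Ico_le hrow hcol hp (half_pos hδ)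
  -- `state (j + 1) = (φ j, M (j + 1))`, and row `φ j` is concentrated on `[M j, M (j + 1))`
  let state : ℕ → ℕ × ℕ := fun j => Nat.rec (0, 0) (fun _ s => (ν s.1 s.2, μ s.1 s.2)) j
  let M j := (state j).2
  let φ j := (state (j + 1)).1
  have hM : StrictMono M := strictMono_nat_of_lt_succ fun j => hμ _ _
  have hφ : StrictMono φ := strictMono_nat_of_lt_succ fun j => hν _ _
  obtain ⟨x, hx_range, hx_block⟩ := hM.exists_eq_on_Ico fun j k => (sign (f (φ j) k) : ℝ)
  have hx : ∀ k, |x k| ≤ 1 := fun k => by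
    obtain ⟨j, hj⟩ := hx_range k
    exact hj ▸ SignType.abs_coe_le_one _
  refine ⟨φ, hφ, fun j => hpν _ _, x, hx, fun j => ?_⟩
  have := tsum_sub_two_mul_le_tsum_mul (hrow (φ j)) hx (hx_block j)
  have := hmass (state j).1 (state j).2
  linarith

end GlidingHump

theorem tendsto_tsum_abs_of_forall_tendsto_tsum_mul {a : ℕ → ℕ → ℝ}
    (hrow : ∀ n, Summable fun k => |a n k|)
    (H : ∀ x : ℕ → ℝ, (∀ k, |x k| ≤ 1) → Tendsto (fun n => ∑' k, a n k * x k) atTop (𝓝 0)) :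
    Tendsto (fun n => ∑' k, |a n k|) atTop (𝓝 0) := by
  have hcol : ∀ k, Tendsto (a · k) atTop (𝓝 0) := fun k => by
    simpa only [tsum_mul_pi_single_one] using
      H (Pi.single k 1) fun i => by by_cases h : i = k <;> simp [h]
  refine tendsto_order.2 ⟨fun b hb => Eventually.of_forall fun n =>
    hb.trans_le (tsum_nonneg fun k => abs_nonneg _), fun ε hε => ?_⟩
  by_contra hfreq
  rw [not_eventually] at hfreq
  obtain ⟨φ, hφ, hεφ, x, hx, hφx⟩ :=
    exists_strictMono_tsum_abs_sub_le_tsum_mul hrow hcol hfreq (half_pos hε)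
  obtain ⟨j, hj⟩ := (((H x hx).comp hφ.tendsto_atTop).eventually (gt_mem_nhds (half_pos hε))).exists
  have := hφx j
  have := not_lt.1 (hεφ j)
  simp only [Function.comp_apply] at hj
  linarith

/-- `A ∈ (ℓ∞, c₀)` iff `lim_n ∑_k |a_{nk}| = 0`. -/
theorem stmt_10 (a : ℕ → ℕ → ℝ) :
    (∀ x : ℕ → ℝ, (∃ C, ∀ k, |x k| ≤ C) →
      (∀ n, Summable fun k => a n k * x k) ∧
      Filter.Tendsto (fun n => ∑' k, a n k * x k) Filter.atTop (nhds 0)) ↔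
    ((∀ n, Summable fun k => |a n k|) ∧
      Filter.Tendsto (fun n => ∑' k, |a n k|) Filter.atTop (nhds 0)) := by
  constructor
  · intro H
    have hrow : ∀ n, Summable fun k => |a n k| := fun n =>
      summable_abs_of_forall_summable_mul fun x hx => (H x ⟨1, hx⟩).1 n
    exact ⟨hrow, tendsto_tsum_abs_of_forall_tendsto_tsum_mul hrow fun x hx => (H x ⟨1, hx⟩).2⟩
  · rintro ⟨hrow, hlim⟩ x ⟨C, hC⟩
    refine ⟨fun n => summable_mul_of_summable_abs (hrow n) hC,
      squeeze_zero_norm (fun n => abs_tsum_mul_le (hrow n) hC) ?_⟩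
    simpa using hlim.const_mul C
end

section
/- Let r, t be sequences of nonzero reals, s with s₀ ≠ 0, and let (D_k) be the reciprocal coefficients of s. A sequence a = (a_n) belongs to the α-dual of ℓ∞(r,s,t;Δ) (i.e., (a_n x_n) ∈ ℓ₁ for every x ∈ ℓ∞(r,s,t;Δ)) if and only if sup over nonempty finite sets K ⊂ ℕ of ∑_{n} |∑_{j∈K} ∑_{k=0}^{n−j} (−1)^k (D_k / t_{k+j}) r_j a_n| is finite (terms with j > n interpreted as 0). -/
/-!
The map `x ↦ A(r,s,t)Δx` is a bijection of real sequences. Its inverse is the lower triangular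
matrix `invCoeff`: convolution with `s` is undone by convolution with `((-1)^k D_k)`, since the
generating series of the two sequences are reciprocal, and `Δ` is undone by partial sums.
Hence `ℓ∞(r,s,t;Δ)` is the image of `ℓ∞`, and `a` lies in the α-dual iff the lower triangular
matrix `c` maps `ℓ∞` into `ℓ₁`. That holds iff `sup_{K,N} ∑_{n<N} |∑_{j∈K} c n j| < ∞`:
sufficiency by duality against sign vectors, necessity by Banach–Steinhaus applied to the
functionals `y ↦ ∑_{n<N} sign (∑_{j∈K} c n j) (c y)_n` on `ℓ∞`.
-/

open Finset

namespace AlphaDual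

def conv (f g : ℕ → ℝ) (n : ℕ) : ℝ := ∑ k ∈ range (n + 1), f (n - k) * g k

lemma mk_conv (f g : ℕ → ℝ) : PowerSeries.mk (conv f g) = PowerSeries.mk g * PowerSeries.mk f := by
  ext n
  rw [PowerSeries.coeff_mul, Nat.sum_antidiagonal_eq_sum_range_succ (fun i j =>
    PowerSeries.coeff i (PowerSeries.mk g) * PowerSeries.coeff j (PowerSeries.mk f))]
  simp only [PowerSeries.coeff_mk, conv, mul_comm]

lemma conv_conv_of_mk_mul_mk_eq_one {e s : ℕ → ℝ} (h : PowerSeries.mk e * PowerSeries.mk s = 1)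
    (v : ℕ → ℝ) : conv e (conv s v) = v := by
  have : PowerSeries.mk (conv e (conv s v)) = PowerSeries.mk v := by
    rw [mk_conv, mk_conv, mul_assoc, mul_comm (PowerSeries.mk s), h, mul_one]
  funext n
  simpa using congrArg (PowerSeries.coeff n) this

lemma mk_mul_mk_eq_one_of_reciprocal {s D : ℕ → ℝ} (hs : s 0 ≠ 0) (hD0 : D 0 = 1 / s 0)
    (hD : ∀ n : ℕ, 1 ≤ n → ∑ k ∈ range (n + 1), (-1 : ℝ) ^ k * D k * s (n - k) = 0) :
    PowerSeries.mk (fun k => (-1 : ℝ) ^ k * D k) * PowerSeries.mk s = 1 := by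
  ext n
  rw [PowerSeries.coeff_mul, Nat.sum_antidiagonal_eq_sum_range_succ (fun i j =>
    PowerSeries.coeff i (PowerSeries.mk fun k => (-1 : ℝ) ^ k * D k) *
      PowerSeries.coeff j (PowerSeries.mk s))]
  simp only [PowerSeries.coeff_mk, PowerSeries.coeff_one]
  rcases n with _ | n
  · simp [hD0, hs]
  · simpa using hD (n + 1) (by omega)

def bdiff (x : ℕ → ℝ) (n : ℕ) : ℝ := x n - if n = 0 then 0 else x (n - 1)

lemma sum_range_bdiff (x : ℕ → ℝ) (n : ℕ) : ∑ m ∈ range (n + 1), bdiff x m = x n := by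
  induction n with
  | zero => simp [bdiff]
  | succ n ih => rw [sum_range_succ, ih]; simp [bdiff]

lemma bdiff_sum_range (v : ℕ → ℝ) : bdiff (fun n => ∑ m ∈ range (n + 1), v m) = v := by
  funext n
  rcases n with _ | n
  · simp [bdiff]
  · simp [bdiff, sum_range_succ _ (n + 1)]

/-- `A(r,s,t)Δx` of the paper, with `x₋₁ = 0`. -/
noncomputable def transform (r s t x : ℕ → ℝ) (n : ℕ) : ℝ :=
  (1 / r n) * ∑ k ∈ range (n + 1), s (n - k) * t k * (x k - if k = 0 then 0 else x (k - 1))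

noncomputable def invCoeff (r t D : ℕ → ℝ) (n j : ℕ) : ℝ :=
  ∑ k ∈ range (n - j + 1), (-1 : ℝ) ^ k * (D k / t (k + j)) * r j

variable {r s t D : ℕ → ℝ}

lemma mul_transform (hr : ∀ n, r n ≠ 0) (x : ℕ → ℝ) (n : ℕ) :
    r n * transform r s t x n = conv s (fun k => t k * bdiff x k) n := by
  simp only [transform, conv, bdiff, mul_assoc]
  field_simp [hr n]

lemma sum_invCoeff_mul (y : ℕ → ℝ) (n : ℕ) :
    ∑ j ∈ range (n + 1), invCoeff r t D n j * y j =
      ∑ m ∈ range (n + 1), 1 / t m * conv (fun k => (-1 : ℝ) ^ k * D k) (fun i => r i * y i) m := by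
  simp only [conv, mul_sum, range_eq_Ico]
  rw [← sum_Ico_Ico_comm]
  refine sum_congr rfl fun j hj => ?_
  have hjn : j ≤ n := Nat.lt_succ_iff.mp (mem_Ico.mp hj).2
  rw [invCoeff, sum_mul, sum_Ico_eq_sum_range, show n + 1 - j = n - j + 1 by omega]
  refine sum_congr rfl fun k _ => ?_
  rw [Nat.add_sub_cancel_left, add_comm j k]
  ring

lemma sum_invCoeff_mul_transform (hr : ∀ n, r n ≠ 0) (ht : ∀ n, t n ≠ 0)
    (hES : PowerSeries.mk (fun k => (-1 : ℝ) ^ k * D k) * PowerSeries.mk s = 1) (x : ℕ → ℝ)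
    (n : ℕ) : ∑ j ∈ range (n + 1), invCoeff r t D n j * transform r s t x j = x n := by
  simp_rw [sum_invCoeff_mul, mul_transform hr, conv_conv_of_mk_mul_mk_eq_one hES]
  rw [← sum_range_bdiff x n]
  refine sum_congr rfl fun m _ => ?_
  field_simp [ht m]

lemma transform_sum_invCoeff_mul (hr : ∀ n, r n ≠ 0) (ht : ∀ n, t n ≠ 0)
    (hES : PowerSeries.mk (fun k => (-1 : ℝ) ^ k * D k) * PowerSeries.mk s = 1) (y : ℕ → ℝ)
    (n : ℕ) : transform r s t (fun m => ∑ j ∈ range (m + 1), invCoeff r t D m j * y j) n = y n := by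
  have hSE : PowerSeries.mk s * PowerSeries.mk (fun k => (-1 : ℝ) ^ k * D k) = 1 := by
    rwa [mul_comm]
  apply mul_left_cancel₀ (hr n)
  simp_rw [mul_transform hr, sum_invCoeff_mul, bdiff_sum_range, one_div,
    mul_inv_cancel_left₀ (ht _)]
  rw [conv_conv_of_mk_mul_mk_eq_one hSE]

lemma abs_sign_le_one (x : ℝ) : |(SignType.sign x : ℝ)| ≤ 1 := by
  rcases SignType.trichotomy (SignType.sign x) with h | h | h <;> simp [h]

section Finite

variable {ι κ : Type*} {R : Finset ι} {J : Finset κ} {c : ι → κ → ℝ} {C : ℝ}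

lemma sum_sum_mul_le_of_abs_le_one (hC : ∀ K ⊆ J, ∑ n ∈ R, |∑ j ∈ K, c n j| ≤ C)
    {σ : ι → ℝ} (hσ : ∀ n, |σ n| ≤ 1) {K : Finset κ} (hK : K ⊆ J) :
    ∑ j ∈ K, ∑ n ∈ R, σ n * c n j ≤ C :=
  calc ∑ j ∈ K, ∑ n ∈ R, σ n * c n j = ∑ n ∈ R, σ n * ∑ j ∈ K, c n j := by
        rw [sum_comm]; simp only [mul_sum]
    _ ≤ ∑ n ∈ R, |∑ j ∈ K, c n j| := sum_le_sum fun n _ =>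
        (le_abs_self _).trans <| by
          rw [abs_mul]; exact mul_le_of_le_one_left (abs_nonneg _) (hσ n)
    _ ≤ C := hC K hK

lemma sum_abs_sum_mul_le_of_abs_le_one (hC : ∀ K ⊆ J, ∑ n ∈ R, |∑ j ∈ K, c n j| ≤ C)
    {σ : ι → ℝ} (hσ : ∀ n, |σ n| ≤ 1) :
    ∑ j ∈ J, |∑ n ∈ R, σ n * c n j| ≤ 2 * C := by
  classical
  set d : κ → ℝ := fun j => ∑ n ∈ R, σ n * c n j
  have hneg : ∀ n, |-σ n| ≤ 1 := fun n => (abs_neg (σ n)).trans_le (hσ n)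
  calc ∑ j ∈ J, |d j|
    _ = ∑ j ∈ J with 0 ≤ d j, d j + ∑ j ∈ J with ¬0 ≤ d j, ∑ n ∈ R, -σ n * c n j := by
        rw [← sum_filter_add_sum_filter_not J (fun j => 0 ≤ d j)]
        congr 1
        · exact sum_congr rfl fun j hj => abs_of_nonneg (mem_filter.mp hj).2
        · refine sum_congr rfl fun j hj => ?_
          rw [abs_of_neg (not_le.mp (mem_filter.mp hj).2)]
          simp [d, neg_mul, sum_neg_distrib]
    _ ≤ C + C := add_le_add (sum_sum_mul_le_of_abs_le_one hC hσ (filter_subset _ _))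
        (sum_sum_mul_le_of_abs_le_one hC hneg (filter_subset _ _))
    _ = 2 * C := by ring

lemma sum_abs_sum_mul_le (hC : ∀ K ⊆ J, ∑ n ∈ R, |∑ j ∈ K, c n j| ≤ C) {y : κ → ℝ} {M : ℝ}
    (hM : 0 ≤ M) (hy : ∀ j ∈ J, |y j| ≤ M) :
    ∑ n ∈ R, |∑ j ∈ J, c n j * y j| ≤ 2 * C * M := by
  set σ : ι → ℝ := fun n => SignType.sign (∑ j ∈ J, c n j * y j)
  have hσ : ∀ n, |σ n| ≤ 1 := fun n => abs_sign_le_one _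
  calc ∑ n ∈ R, |∑ j ∈ J, c n j * y j| = ∑ j ∈ J, y j * ∑ n ∈ R, σ n * c n j := by
        simp_rw [← sign_mul_self, mul_sum]
        rw [sum_comm]
        exact sum_congr rfl fun j _ => sum_congr rfl fun n _ => by ring
    _ ≤ ∑ j ∈ J, M * |∑ n ∈ R, σ n * c n j| := sum_le_sum fun j hj =>
        (le_abs_self _).trans <| by
          rw [abs_mul]; exact mul_le_mul_of_nonneg_right (hy j hj) (abs_nonneg _)
    _ ≤ M * (2 * C) := by
        rw [← mul_sum]; exact mul_le_mul_of_nonneg_left (sum_abs_sum_mul_le_of_abs_le_one hC hσ) hM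
    _ = 2 * C * M := by ring

end Finite

section LowerTriangular

variable {c : ℕ → ℕ → ℝ}

lemma sum_range_succ_mul_eq_sum_range (hc : ∀ n j, n < j → c n j = 0) {n N : ℕ} (hn : n < N)
    (y : ℕ → ℝ) : ∑ j ∈ range (n + 1), c n j * y j = ∑ j ∈ range N, c n j * y j :=
  sum_subset (range_subset_range.mpr hn) fun j _ hj => by
    rw [hc n j (by simpa using hj), zero_mul]

lemma summable_of_bound (hc : ∀ n j, n < j → c n j = 0) {C : ℝ}
    (hC : ∀ (K : Finset ℕ) (N : ℕ), ∑ n ∈ range N, |∑ j ∈ K, c n j| ≤ C) {y : ℕ → ℝ}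
    (hy : BddAbove (Set.range fun n => |y n|)) :
    Summable fun n => |∑ j ∈ range (n + 1), c n j * y j| := by
  obtain ⟨M, hM⟩ := hy
  have hyM : ∀ j, |y j| ≤ M := fun j => hM ⟨j, rfl⟩
  refine summable_of_sum_range_le (c := 2 * C * M) (fun _ => abs_nonneg _) fun N => ?_
  calc ∑ n ∈ range N, |∑ j ∈ range (n + 1), c n j * y j|
      = ∑ n ∈ range N, |∑ j ∈ range N, c n j * y j| := sum_congr rfl fun n hn => by
        rw [sum_range_succ_mul_eq_sum_range hc (mem_range.mp hn)]
    _ ≤ 2 * C * M := sum_abs_sum_mul_le (fun K _ => hC K N) ((abs_nonneg _).trans (hyM 0))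
        fun j _ => hyM j

lemma exists_bound_of_summable (hc : ∀ n j, n < j → c n j = 0)
    (h : ∀ y : ℕ → ℝ, BddAbove (Set.range fun n => |y n|) →
      Summable fun n => |∑ j ∈ range (n + 1), c n j * y j|) :
    ∃ C, ∀ (K : Finset ℕ) (N : ℕ), ∑ n ∈ range N, |∑ j ∈ K, c n j| ≤ C := by
  classical
  let σ : Finset ℕ → ℕ → ℝ := fun K n => SignType.sign (∑ j ∈ K, c n j)
  let g : ℕ × Finset ℕ → lp (fun _ : ℕ => ℝ) ⊤ →L[ℝ] ℝ := fun i =>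
    ∑ n ∈ range i.1, ∑ j ∈ range (n + 1), (σ i.2 n * c n j) • lp.evalCLM ℝ _ ⊤ j
  have hg : ∀ i y, g i y = ∑ n ∈ range i.1, σ i.2 n * ∑ j ∈ range (n + 1), c n j * y j := by
    intro i y
    have hev : ∀ j, lp.evalCLM ℝ (fun _ : ℕ => ℝ) ⊤ j y = y j := fun _ => rfl
    simp [g, hev, mul_sum, mul_assoc]
  obtain ⟨C, hC⟩ := banach_steinhaus (g := g) fun y => by
    have hy : BddAbove (Set.range fun n => |y n|) := by
      simpa only [Real.norm_eq_abs] using memℓp_infty_iff.mp (lp.memℓp y)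
    refine ⟨∑' n, |∑ j ∈ range (n + 1), c n j * y j|, fun i => ?_⟩
    calc ‖g i y‖ ≤ ∑ n ∈ range i.1, |∑ j ∈ range (n + 1), c n j * y j| := by
          rw [hg, Real.norm_eq_abs]
          refine (abs_sum_le_sum_abs _ _).trans (sum_le_sum fun n _ => ?_)
          rw [abs_mul]
          exact mul_le_of_le_one_left (abs_nonneg _) (abs_sign_le_one _)
      _ ≤ _ := (h y hy).sum_le_tsum _ fun n _ => abs_nonneg _
  refine ⟨C, fun K N => ?_⟩
  let e : lp (fun _ : ℕ => ℝ) ⊤ := ⟨fun j => if j ∈ K then 1 else 0, memℓp_infty ⟨1, by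
    rintro _ ⟨j, rfl⟩; dsimp only; split_ifs <;> simp⟩⟩
  have he : ‖e‖ ≤ 1 := lp.norm_le_of_forall_le zero_le_one fun j => by
    change ‖(if j ∈ K then 1 else 0 : ℝ)‖ ≤ 1; split_ifs <;> simp
  have hsum : ∀ n, ∑ j ∈ range (n + 1), c n j * e j = ∑ j ∈ K, c n j := fun n => by
    change ∑ j ∈ range (n + 1), c n j * (if j ∈ K then 1 else 0 : ℝ) = _
    simp only [mul_ite, mul_one, mul_zero, ← sum_filter]
    refine sum_subset (fun j hj => (mem_filter.mp hj).2) fun j hjK hj => hc n j ?_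
    simpa [hjK] using hj
  calc ∑ n ∈ range N, |∑ j ∈ K, c n j| = g (N, K) e := by
        simp only [hg, hsum, σ, sign_mul_self]
    _ ≤ ‖g (N, K)‖ * ‖e‖ := (le_abs_self _).trans ((g (N, K)).le_opNorm e)
    _ ≤ C := (mul_le_of_le_one_right (norm_nonneg _) he).trans (hC _)

theorem forall_summable_iff_exists_bound (hc : ∀ n j, n < j → c n j = 0) :
    (∀ y : ℕ → ℝ, BddAbove (Set.range fun n => |y n|) →
      Summable fun n => |∑ j ∈ range (n + 1), c n j * y j|) ↔
    ∃ C, ∀ (K : Finset ℕ) (N : ℕ), ∑ n ∈ range N, |∑ j ∈ K, c n j| ≤ C :=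
  ⟨exists_bound_of_summable hc, fun ⟨_, hC⟩ _ => summable_of_bound hc hC⟩

end LowerTriangular

end AlphaDual

open Finset AlphaDual

/-- The α-dual of `ℓ∞(r,s,t;Δ)`: `(a_n x_n) ∈ ℓ₁` for every `x ∈ ℓ∞(r,s,t;Δ)`
iff `sup_{K finite nonempty} ∑_n |∑_{j∈K} ∑_{k=0}^{n-j} (-1)^k (D_k/t_{k+j}) r_j a_n| < ∞`. -/
theorem stmt_15 (r s t D a : ℕ → ℝ) (hr : ∀ n, r n ≠ 0) (ht : ∀ n, t n ≠ 0)
    (hs : s 0 ≠ 0) (hD0 : D 0 = 1 / s 0)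
    (hD : ∀ n : ℕ, 1 ≤ n →
      (∑ k ∈ Finset.range (n + 1), (-1 : ℝ) ^ k * D k * s (n - k)) = 0) :
    let T : (ℕ → ℝ) → ℕ → ℝ := fun x n =>
      (1 / r n) * ∑ k ∈ Finset.range (n + 1),
        s (n - k) * t k * (x k - if k = 0 then 0 else x (k - 1))
    let X : Set (ℕ → ℝ) := {x | BddAbove (Set.range fun n => |T x n|)}
    let c : ℕ → ℕ → ℝ := fun n j =>
      if j ≤ n then
        (∑ k ∈ Finset.range (n - j + 1), (-1 : ℝ) ^ k * (D k / t (k + j)) * r j) * a n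
      else 0
    ((∀ x ∈ X, Summable fun n => |a n * x n|) ↔
      ∃ C, ∀ K : Finset ℕ, K.Nonempty →
        ∀ N : ℕ, ∑ n ∈ Finset.range N, |∑ j ∈ K, c n j| ≤ C) := by
  intro T X c
  have hES := mk_mul_mk_eq_one_of_reciprocal hs hD0 hD
  have hc : ∀ n j, n < j → c n j = 0 := fun n j h => if_neg (by omega)
  have hax : ∀ x n, a n * x n = ∑ j ∈ range (n + 1), c n j * T x j := fun x n => by
    rw [← sum_invCoeff_mul_transform hr ht hES x n, mul_sum]
    refine sum_congr rfl fun j hj => ?_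
    rw [show c n j = invCoeff r t D n j * a n from if_pos (Nat.lt_succ_iff.mp (mem_range.mp hj))]
    simp only [T, transform]
    ring
  have hX : (∀ x ∈ X, Summable fun n => |a n * x n|) ↔
      ∀ y : ℕ → ℝ, BddAbove (Set.range fun n => |y n|) →
        Summable fun n => |∑ j ∈ range (n + 1), c n j * y j| := by
    refine ⟨fun H y hy => ?_, fun H x hx => by simpa only [hax] using H (T x) hx⟩
    let x : ℕ → ℝ := fun m => ∑ j ∈ range (m + 1), invCoeff r t D m j * y j
    have hTx : T x = y := funext (transform_sum_invCoeff_mul hr ht hES y)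
    simpa only [hax, hTx] using H x (show BddAbove _ by rwa [hTx])
  rw [hX, forall_summable_iff_exists_bound hc]
  refine ⟨fun ⟨C, hC⟩ => ⟨C, fun K _ => hC K⟩, fun ⟨C, hC⟩ => ⟨C, fun K N => ?_⟩⟩
  rcases K.eq_empty_or_nonempty with rfl | hK
  · simpa using hC {0} (singleton_nonempty 0) 0
  · exact hC K hK N
end

section
/- Let r, t be sequences of nonzero reals, s with s₀ ≠ 0, (D_k) the reciprocal coefficients of s, and a = (a_n) any real sequence. For every x in the span of the representation x_n = ∑_{j=0}^{n} ∑_{k=0}^{n−j} (−1)^k (D_k/t_{k+j}) r_j y_j (y arbitrary), the Abel-type summation identity holds for every m: ∑_{n=0}^{m} a_n x_n = ∑_{n=0}^{m} r_n [ a_n/(s₀ t_n) + (D₀/t_n − D₁/t_{n+1}) ∑_{j=n+1}^{m} a_j + ∑_{j=n+2}^{m} (−1)^{j−n} (D_{j−n}/t_j) ∑_{k=j}^{m} a_k ] y_n, where empty sums are 0. -/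
/-!
Expanding `x_n` and exchanging the order of summation over the triangle `j ≤ n ≤ m`, the
coefficient of `r_j y_j` becomes `∑_{n=j}^{m} a_n ∑_{k ≤ n-j} c_k` with
`c_k = (-1)^k D_k / t_{k+j}`. Exchanging once more turns this into `∑_k c_k A_{j+k}`, where
`A_i = ∑_{l=i}^{m} a_l` is a tail sum, and splitting off the terms `k = 0, 1` (using
`A_j = a_j + A_{j+1}` and `D₀ = 1/s₀`) gives the stated coefficient.
-/

open Finset

theorem sum_range_succ_sum_range_succ_comm {M : Type*} [AddCommMonoid M] (f : ℕ → ℕ → M)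
    (m : ℕ) :
    ∑ n ∈ range (m + 1), ∑ j ∈ range (n + 1), f n j = ∑ j ∈ range (m + 1), ∑ n ∈ Icc j m, f n j :=
  sum_comm' fun n j => by simp only [mem_range, mem_Icc]; omega

theorem sum_Icc_eq_add_sum_Icc_succ {M : Type*} [AddCommMonoid M] (f : ℕ → M) {n m : ℕ}
    (h : n ≤ m) : ∑ i ∈ Icc n m, f i = f n + ∑ i ∈ Icc (n + 1) m, f i := by
  rw [Icc_add_one_left_eq_Ioc, add_sum_Ioc_eq_sum_Icc h]

section

variable {R : Type*} [CommSemiring R]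

theorem sum_Icc_mul_sum_range_sub_succ (a c : ℕ → R) (j m : ℕ) :
    ∑ n ∈ Icc j m, a n * ∑ k ∈ range (n - j + 1), c k =
      ∑ k ∈ range (m - j + 1), c k * ∑ i ∈ Icc (j + k) m, a i := by
  simp only [mul_sum]
  rw [sum_comm' (t' := range (m - j + 1)) (s' := fun k => Icc (j + k) m)
    fun n k => by simp only [mem_range, mem_Icc]; omega]
  exact sum_congr rfl fun _ _ => sum_congr rfl fun _ _ => mul_comm _ _

theorem sum_range_mul_sum_Icc_eq_add_add_sum_Icc (a c : ℕ → R) {n m : ℕ} (h : n ≤ m) :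
    ∑ k ∈ range (m - n + 1), c k * ∑ i ∈ Icc (n + k) m, a i =
      c 0 * a n + (c 0 + c 1) * ∑ i ∈ Icc (n + 1) m, a i +
        ∑ j ∈ Icc (n + 2) m, c (j - n) * ∑ i ∈ Icc j m, a i := by
  set T : ℕ → R := fun j => ∑ i ∈ Icc j m, a i
  have hreindex : ∑ k ∈ range (m - n + 1), c k * T (n + k) = ∑ j ∈ Icc n m, c (j - n) * T j := by
    rw [← Ico_add_one_right_eq_Icc, sum_Ico_eq_sum_range, Nat.sub_add_comm h]
    exact sum_congr rfl fun k _ => by rw [Nat.add_sub_cancel_left]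
  have htail : ∑ j ∈ Icc (n + 1) m, c (j - n) * T j =
      c 1 * T (n + 1) + ∑ j ∈ Icc (n + 2) m, c (j - n) * T j := by
    rcases Nat.lt_or_ge n m with hnm | hmn
    · rw [sum_Icc_eq_add_sum_Icc_succ _ (show n + 1 ≤ m from hnm), Nat.add_sub_cancel_left]
    · obtain rfl := le_antisymm h hmn
      simp [T]
  change ∑ k ∈ range (m - n + 1), c k * T (n + k) = c 0 * a n + (c 0 + c 1) * T (n + 1) + _
  rw [hreindex, sum_Icc_eq_add_sum_Icc_succ _ h, htail, Nat.sub_self,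
    show T n = a n + T (n + 1) from sum_Icc_eq_add_sum_Icc_succ _ h]
  ring

end

theorem stmt_16_general (r s t D a y : ℕ → ℝ) (hD0 : D 0 = 1 / s 0) :
    let x : ℕ → ℝ := fun n => ∑ j ∈ Finset.range (n + 1),
      (∑ k ∈ Finset.range (n - j + 1), (-1 : ℝ) ^ k * (D k / t (k + j)) * r j) * y j
    ∀ m : ℕ,
      ∑ n ∈ Finset.range (m + 1), a n * x n =
      ∑ n ∈ Finset.range (m + 1), r n *
        (a n / (s 0 * t n)
          + (D 0 / t n - D 1 / t (n + 1)) * ∑ j ∈ Finset.Icc (n + 1) m, a j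
          + ∑ j ∈ Finset.Icc (n + 2) m,
              (-1 : ℝ) ^ (j - n) * (D (j - n) / t j) * ∑ k ∈ Finset.Icc j m, a k) * y n := by
  intro x m
  set c : ℕ → ℕ → ℝ := fun j k => (-1 : ℝ) ^ k * (D k / t (k + j))
  have hx : ∀ n, a n * x n =
      ∑ j ∈ range (n + 1), r j * (a n * ∑ k ∈ range (n - j + 1), c j k) * y j := fun n => by
    simp only [x, mul_sum, sum_mul]
    exact sum_congr rfl fun _ _ => sum_congr rfl fun _ _ => by ring
  rw [sum_congr rfl fun n _ => hx n, sum_range_succ_sum_range_succ_comm]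
  refine sum_congr rfl fun n hn => ?_
  rw [← sum_mul, ← mul_sum, sum_Icc_mul_sum_range_sub_succ,
    sum_range_mul_sum_Icc_eq_add_add_sum_Icc _ _ (Nat.lt_succ_iff.mp (mem_range.mp hn))]
  have hcoef : ∀ j ∈ Icc (n + 2) m, c n (j - n) = (-1 : ℝ) ^ (j - n) * (D (j - n) / t j) :=
    fun j hj => by simp only [c, Nat.sub_add_cancel (Nat.le_of_add_right_le (mem_Icc.mp hj).1)]
  rw [sum_congr rfl fun j hj => congrArg (· * ∑ i ∈ Icc j m, a i) (hcoef j hj)]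
  simp only [c, hD0, pow_zero, pow_one, one_mul, neg_one_mul, zero_add, add_comm 1 n]
  ring

/-- Abel-type summation identity: for `x_n = ∑_{j≤n} ∑_{k≤n-j} (-1)^k (D_k/t_{k+j}) r_j y_j`,
the partial sums `∑_{n≤m} a_n x_n` equal `(Ey)_m` for the matrix `E` of Theorem 4.6. -/
theorem stmt_16 (r s t D a y : ℕ → ℝ) (hr : ∀ n, r n ≠ 0) (ht : ∀ n, t n ≠ 0)
    (hs : s 0 ≠ 0) (hD0 : D 0 = 1 / s 0)
    (hD : ∀ n : ℕ, 1 ≤ n →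
      (∑ k ∈ Finset.range (n + 1), (-1 : ℝ) ^ k * D k * s (n - k)) = 0) :
    let x : ℕ → ℝ := fun n => ∑ j ∈ Finset.range (n + 1),
      (∑ k ∈ Finset.range (n - j + 1), (-1 : ℝ) ^ k * (D k / t (k + j)) * r j) * y j
    ∀ m : ℕ,
      ∑ n ∈ Finset.range (m + 1), a n * x n =
      ∑ n ∈ Finset.range (m + 1), r n *
        (a n / (s 0 * t n)
          + (D 0 / t n - D 1 / t (n + 1)) * ∑ j ∈ Finset.Icc (n + 1) m, a j
          + ∑ j ∈ Finset.Icc (n + 2) m,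
              (-1 : ℝ) ^ (j - n) * (D (j - n) / t j) * ∑ k ∈ Finset.Icc j m, a k) * y n :=
  stmt_16_general r s t D a y hD0
end

section
/- Let s_n = 1 for all n and (D_k) its reciprocal coefficient sequence. Then for any sequences r, t of nonzero reals, the inverse S = (s_{jk}) of the product triangle T = A(r,s,t)·Δ is given by s_{jk} = r_k(1/t_k − 1/t_{k+1}) for 0 ≤ k < j, s_{jj} = r_j/t_j, and s_{jk} = 0 for k > j; that is, (T·S)_{nk} = (S·T)_{nk} = δ_{nk}. -/
/-!
Write `Σ` for the summation triangle (ones on and below the diagonal), so that `Δ·Σ = I`.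
Then `T = diag(1/r)·Σ·diag(t)·Δ`, and the claimed inverse is `S = Σ·diag(1/t)·Δ·diag(r)`.
Triangles of the form `Σ·diag(f)·Δ` multiply like the diagonal matrices `diag(f)`, because
the inner factor `Δ·Σ` cancels; hence both products reduce to `Σ·diag(t/t)·Δ = Σ·Δ = I`.
-/

open Finset

/-- The triangle `Σ·diag(f)·Δ`. -/
def diffTriangle (f : ℕ → ℝ) (n k : ℕ) : ℝ :=
  (if k ≤ n then f k else 0) - (if k + 1 ≤ n then f (k + 1) else 0)

lemma diffTriangle_succ (f : ℕ → ℝ) (n k : ℕ) :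
    diffTriangle f (n + 1) k =
      diffTriangle f n k + (if k = n + 1 then f (n + 1) else 0) -
        (if k = n then f (n + 1) else 0) := by
  unfold diffTriangle
  split_ifs <;> first | omega | (subst_vars; ring)

lemma diffTriangle_eq_zero_of_lt {f : ℕ → ℝ} {n k : ℕ} (h : n < k) :
    diffTriangle f n k = 0 := by
  simp [diffTriangle, show ¬k ≤ n by omega, show ¬k + 1 ≤ n by omega]

lemma diffTriangle_self (f : ℕ → ℝ) (n : ℕ) : diffTriangle f n n = f n := by
  simp [diffTriangle]

lemma diffTriangle_one (n k : ℕ) : diffTriangle 1 n k = if n = k then 1 else 0 := by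
  unfold diffTriangle
  split_ifs <;> first | omega | simp

lemma diffTriangle_div_const (f : ℕ → ℝ) (c : ℝ) (n k : ℕ) :
    diffTriangle (fun i => f i / c) n k = diffTriangle f n k / c := by
  unfold diffTriangle
  split_ifs <;> ring

lemma sum_diffTriangle_mul_diffTriangle (f g : ℕ → ℝ) (n k : ℕ) :
    ∑ j ∈ range (n + 1), diffTriangle f n j * diffTriangle g j k =
      diffTriangle (f * g) n k := by
  induction n with
  | zero =>
    simp only [zero_add, sum_range_one, diffTriangle_self]
    rcases Nat.eq_zero_or_pos k with rfl | hk
    · simp [diffTriangle_self]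
    · simp [diffTriangle_eq_zero_of_lt hk]
  | succ n ih =>
    simp only [diffTriangle_succ f n, add_mul, sub_mul, sum_sub_distrib, sum_add_distrib,
      ite_mul, zero_mul, sum_ite_eq', mem_range]
    rw [sum_range_succ, ih, diffTriangle_eq_zero_of_lt (Nat.lt_succ_self n), zero_mul,
      diffTriangle_succ g n k, diffTriangle_succ (f * g) n k,
      if_pos (by omega : n < n + 1 + 1)]
    simp only [lt_add_iff_pos_right, zero_lt_one, ↓reduceIte, Pi.mul_apply]
    split_ifs <;> ring

lemma sum_mul_diff_eq_diffTriangle (a : ℕ → ℝ) (n k : ℕ) :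
    ∑ j ∈ range (n + 1), (if j ≤ n then a j else 0) *
        (if k = j then 1 else if k + 1 = j then -1 else 0) = diffTriangle a n k := by
  have hterm : ∀ j ∈ range (n + 1), (if j ≤ n then a j else 0) *
      (if k = j then 1 else if k + 1 = j then -1 else 0) =
        (if k = j then a j else 0) - (if k + 1 = j then a j else 0) := by
    intro j hj
    rw [if_pos (Nat.lt_succ_iff.mp (mem_range.mp hj))]
    split_ifs <;> first | omega | ring
  rw [sum_congr rfl hterm, sum_sub_distrib, sum_ite_eq, sum_ite_eq]
  simp only [mem_range, Nat.lt_succ_iff, diffTriangle]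

/-- For `s ≡ 1`, the explicit matrix `S` with `s_{jk} = r_k(1/t_k - 1/t_{k+1})`
for `k < j`, `s_{jj} = r_j/t_j`, is the two-sided inverse of `T = A(r,s,t)·Δ`. -/
theorem stmt_18 (r t : ℕ → ℝ) (hr : ∀ n, r n ≠ 0) (ht : ∀ n, t n ≠ 0) :
    let A : ℕ → ℕ → ℝ := fun n k => if k ≤ n then t k / r n else 0
    let Dm : ℕ → ℕ → ℝ := fun j k => if k = j then 1 else if k + 1 = j then -1 else 0
    let Tm : ℕ → ℕ → ℝ := fun n k => ∑ j ∈ Finset.range (n + 1), A n j * Dm j k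
    let S : ℕ → ℕ → ℝ := fun j k =>
      if k < j then r k * (1 / t k - 1 / t (k + 1))
      else if k = j then r j / t j else 0
    (∀ n k, (∑ j ∈ Finset.range (n + 1), Tm n j * S j k) = if n = k then 1 else 0) ∧
    (∀ n k, (∑ j ∈ Finset.range (n + 1), S n j * Tm j k) = if n = k then 1 else 0) := by
  intro A Dm Tm S
  set u : ℕ → ℝ := fun i => 1 / t i
  have hT : ∀ n k, Tm n k = diffTriangle t n k / r n := fun n k => by
    rw [← diffTriangle_div_const]
    exact sum_mul_diff_eq_diffTriangle _ n k
  have hS : ∀ j k, S j k = r k * diffTriangle u j k := fun j k => by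
    simp only [S, u, diffTriangle]
    split_ifs <;> first | omega | (subst_vars; ring)
  have htu : t * u = 1 := funext fun i => mul_one_div_cancel (ht i)
  refine ⟨fun n k => ?_, fun n k => ?_⟩
  · calc ∑ j ∈ range (n + 1), Tm n j * S j k
        = r k / r n * ∑ j ∈ range (n + 1), diffTriangle t n j * diffTriangle u j k := by
          rw [mul_sum]
          exact sum_congr rfl fun j _ => by rw [hT, hS]; ring
      _ = if n = k then 1 else 0 := by
          rw [sum_diffTriangle_mul_diffTriangle, htu, diffTriangle_one]
          split_ifs with h
          · rw [h, div_self (hr k), one_mul]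
          · rw [mul_zero]
  · calc ∑ j ∈ range (n + 1), S n j * Tm j k
        = ∑ j ∈ range (n + 1), diffTriangle u n j * diffTriangle t j k :=
          sum_congr rfl fun j _ => by rw [hT, hS]; field_simp [hr j]
      _ = if n = k then 1 else 0 := by
          rw [sum_diffTriangle_mul_diffTriangle, mul_comm, htu, diffTriangle_one]
end
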